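/- arXiv:1301.1558 — 2 statements merged into one kernel-verified Lean document; each statement's English description precedes it below -/
import Mathlib

section
/- For any X = (y,U,ν,r) ∈ F with h = ∫₀¹ ν(η) dη, the function f defined by f(ξ) = (1/(1+h))(y(ξ) + ∫₀^ξ ν(η) dη) belongs to the relabeling group G, and the relabeled element X • f^{−1} belongs to F₀, i.e., it satisfies y_ξ + ν = 1 + h almost everywhere. -/
open MeasureTheory Real Set Filter Function

noncomputable section

/-- Lagrangian variables for the periodic 2CH system: `y` is the characteristic,
`U` the Lagrangian velocity, `ν` the Lagrangian energy density, `r` the Lagrangian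
density; `yξ` and `Uξ` are the spatial (ξ) derivatives of `y` and `U`. -/
structure LagVar where
  y : ℝ → ℝ
  U : ℝ → ℝ
  ν : ℝ → ℝ
  r : ℝ → ℝ
  yξ : ℝ → ℝ
  Uξ : ℝ → ℝ

/-- The `L^∞([0,1])` norm. -/
def supNorm01 (f : ℝ → ℝ) : ℝ := sSup ((fun x => |f x|) '' Set.Icc (0:ℝ) 1)

/-- The `L^1([0,1])` norm. -/
def L1norm01 (f : ℝ → ℝ) : ℝ := ∫ x in (0:ℝ)..1, |f x|

/-- The `W^{1,1}_per` norm of a function `f` with (a.e.) derivative `f'`. -/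
def W11norm (f f' : ℝ → ℝ) : ℝ := supNorm01 f + L1norm01 f'

/-- The `W^{1,1}_per` norm, using `deriv`. -/
def W11normD (f : ℝ → ℝ) : ℝ := supNorm01 f + L1norm01 (deriv f)

/-- Membership in the Banach space `E`: `y − id`, `U` belong to `W^{1,1}_per`
(absolutely continuous with the given derivatives `yξ`, `Uξ`) and `ν`, `r ∈ L^1_per`. -/
def InE (X : LagVar) : Prop :=
  Continuous X.y ∧ Continuous X.U ∧
  (∀ ξ, X.y (ξ + 1) = X.y ξ + 1) ∧
  (∀ ξ, X.U (ξ + 1) = X.U ξ) ∧ (∀ ξ, X.ν (ξ + 1) = X.ν ξ) ∧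
  (∀ ξ, X.r (ξ + 1) = X.r ξ) ∧ (∀ ξ, X.yξ (ξ + 1) = X.yξ ξ) ∧
  (∀ ξ, X.Uξ (ξ + 1) = X.Uξ ξ) ∧
  (∀ a b : ℝ, X.y b - X.y a = ∫ ξ in a..b, X.yξ ξ) ∧
  (∀ a b : ℝ, X.U b - X.U a = ∫ ξ in a..b, X.Uξ ξ) ∧
  IntervalIntegrable X.yξ volume 0 1 ∧ IntervalIntegrable X.Uξ volume 0 1 ∧
  IntervalIntegrable X.ν volume 0 1 ∧ IntervalIntegrable X.r volume 0 1

/-- The `E`-norm of the difference of two elements of `E`: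
`‖X − X'‖_E = ‖y − y'‖_{W^{1,1}_per} + ‖U − U'‖_{W^{1,1}_per} + ‖ν − ν'‖_{L^1_per} + ‖r − r'‖_{L^1_per}`. -/
def Edist (X X' : LagVar) : ℝ :=
  W11norm (fun ξ => X.y ξ - X'.y ξ) (fun ξ => X.yξ ξ - X'.yξ ξ)
    + W11norm (fun ξ => X.U ξ - X'.U ξ) (fun ξ => X.Uξ ξ - X'.Uξ ξ)
    + L1norm01 (fun ξ => X.ν ξ - X'.ν ξ)
    + L1norm01 (fun ξ => X.r ξ - X'.r ξ)

/-- The bounded set `B_M ⊂ E`. -/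
def InBM (M : ℝ) (X : LagVar) : Prop :=
  W11norm X.U X.Uξ + L1norm01 X.yξ + L1norm01 X.ν ≤ M

/-- The map `P` of the Lagrangian 2CH system. -/
def Pmap (X : LagVar) (ξ : ℝ) : ℝ :=
  (1 / (2 * (Real.exp 1 - 1))) *
      ∫ η in (0:ℝ)..1, Real.cosh (X.y ξ - X.y η) * ((X.U η)^2 * X.yξ η + X.ν η)
    + (1/4) * ∫ η in (0:ℝ)..1,
        Real.exp (-(Real.sign (ξ - η)) * (X.y ξ - X.y η)) * ((X.U η)^2 * X.yξ η + X.ν η)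

/-- The map `Q` of the Lagrangian 2CH system. -/
def Qmap (X : LagVar) (ξ : ℝ) : ℝ :=
  (1 / (2 * (Real.exp 1 - 1))) *
      ∫ η in (0:ℝ)..1, Real.sinh (X.y ξ - X.y η) * ((X.U η)^2 * X.yξ η + X.ν η)
    - (1/4) * ∫ η in (0:ℝ)..1,
        Real.sign (ξ - η) * Real.exp (-(Real.sign (ξ - η)) * (X.y ξ - X.y η)) *
          ((X.U η)^2 * X.yξ η + X.ν η)

/-- Membership in the set `F ⊂ E`. -/
def InF (X : LagVar) : Prop :=
  InE X ∧
  (∃ C : ℝ, ∀ᵐ ξ ∂(volume : Measure ℝ),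
      |X.yξ ξ| ≤ C ∧ |X.Uξ ξ| ≤ C ∧ |X.ν ξ| ≤ C ∧ |X.r ξ| ≤ C) ∧
  (∀ᵐ ξ ∂(volume : Measure ℝ), 0 ≤ X.yξ ξ) ∧
  (∀ᵐ ξ ∂(volume : Measure ℝ), 0 ≤ X.ν ξ) ∧
  (∃ c : ℝ, 0 < c ∧ ∀ᵐ ξ ∂(volume : Measure ℝ), c ≤ X.yξ ξ + X.ν ξ) ∧
  (∀ᵐ ξ ∂(volume : Measure ℝ),
      X.yξ ξ * X.ν ξ = (X.yξ ξ)^2 * (X.U ξ)^2 + (X.Uξ ξ)^2 + (X.r ξ)^2)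

/-- `X : ℝ → LagVar` is a (global, for `t ≥ 0`) solution of the Lagrangian 2CH system
`y_t = U`, `U_t = −Q`, `ν_t = −2QUy_ξ + (3U² − 2P)U_ξ`, `r_t = 0`. -/
def IsLagSolution (X : ℝ → LagVar) : Prop :=
  (∀ t, 0 ≤ t → InE (X t)) ∧
  (∀ ξ, ∀ t, 0 ≤ t →
    HasDerivWithinAt (fun s => (X s).y ξ) ((X t).U ξ) (Set.Ici 0) t) ∧
  (∀ ξ, ∀ t, 0 ≤ t →
    HasDerivWithinAt (fun s => (X s).U ξ) (-(Qmap (X t) ξ)) (Set.Ici 0) t) ∧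
  (∀ ξ, ∀ t, 0 ≤ t →
    HasDerivWithinAt (fun s => (X s).ν ξ)
      (-2 * Qmap (X t) ξ * (X t).U ξ * (X t).yξ ξ
        + (3 * ((X t).U ξ)^2 - 2 * Pmap (X t) ξ) * (X t).Uξ ξ) (Set.Ici 0) t) ∧
  (∀ ξ, ∀ t, 0 ≤ t →
    HasDerivWithinAt (fun s => (X s).r ξ) 0 (Set.Ici 0) t)

/-- A relabeling function `f`, together with its inverse and its derivative. -/
structure Relabel where
  f : ℝ → ℝ
  finv : ℝ → ℝ
  fξ : ℝ → ℝ

/-- Membership in the relabeling group `G`. -/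
def InG (g : Relabel) : Prop :=
  Function.LeftInverse g.finv g.f ∧ Function.RightInverse g.finv g.f ∧
  (∀ ξ, g.f (ξ + 1) = g.f ξ + 1) ∧
  (∃ K : NNReal, LipschitzWith K g.f) ∧
  (∃ K : NNReal, LipschitzWith K g.finv) ∧
  (∀ a b : ℝ, g.f b - g.f a = ∫ ξ in a..b, g.fξ ξ)

/-- The action `X • f = (y∘f, U∘f, (ν∘f)f_ξ, (r∘f)f_ξ)` of a relabeling function on `F`. -/
def act (X : LagVar) (g : Relabel) : LagVar where
  y := fun ξ => X.y (g.f ξ)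
  U := fun ξ => X.U (g.f ξ)
  ν := fun ξ => X.ν (g.f ξ) * g.fξ ξ
  r := fun ξ => X.r (g.f ξ) * g.fξ ξ
  yξ := fun ξ => X.yξ (g.f ξ) * g.fξ ξ
  Uξ := fun ξ => X.Uξ (g.f ξ) * g.fξ ξ

/-- The inverse of a relabeling function. -/
def Relabel.inverse (g : Relabel) : Relabel := ⟨g.finv, g.f, deriv g.finv⟩

/-- `F₀ = {X ∈ F : y_ξ + ν = 1 + h a.e.}`, where `h = ∫₀¹ ν`. -/
def InF0 (X : LagVar) : Prop :=
  InF X ∧ ∀ᵐ ξ ∂(volume : Measure ℝ), X.yξ ξ + X.ν ξ = 1 + ∫ η in (0:ℝ)..1, X.ν η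

/-- `H = {X ∈ F₀ : ∫₀¹ y dξ = 0}`. -/
def InH (X : LagVar) : Prop := InF0 X ∧ (∫ ξ in (0:ℝ)..1, X.y ξ) = 0

/-- `H^M = {X ∈ H : h ≤ M}`. -/
def InHM (M : ℝ) (X : LagVar) : Prop := InH X ∧ (∫ ξ in (0:ℝ)..1, X.ν ξ) ≤ M

/-- The relabeling function `f(ξ) = (1/(1+h))(y(ξ) + ∫₀^ξ ν)` associated with `X ∈ F`. -/
def relabelOf (X : LagVar) : Relabel :=
  ⟨fun ξ => (1 / (1 + ∫ η in (0:ℝ)..1, X.ν η)) * (X.y ξ + ∫ η in (0:ℝ)..ξ, X.ν η),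
   Function.invFun
     (fun ξ => (1 / (1 + ∫ η in (0:ℝ)..1, X.ν η)) * (X.y ξ + ∫ η in (0:ℝ)..ξ, X.ν η)),
   deriv (fun ξ => (1 / (1 + ∫ η in (0:ℝ)..1, X.ν η)) * (X.y ξ + ∫ η in (0:ℝ)..ξ, X.ν η))⟩

/-- The projection `Π₁ : F → F₀`, `Π₁(X) = X • f⁻¹`. -/
def Pi1 (X : LagVar) : LagVar := act X (relabelOf X).inverse

/-- The shift `(Π₂ X)(ξ) = X(ξ − a)`. -/
def shiftX (X : LagVar) (a : ℝ) : LagVar :=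
  ⟨fun ξ => X.y (ξ - a), fun ξ => X.U (ξ - a), fun ξ => X.ν (ξ - a), fun ξ => X.r (ξ - a),
   fun ξ => X.yξ (ξ - a), fun ξ => X.Uξ (ξ - a)⟩

/-- The projection `Π = Π₂ ∘ Π₁ : F → H`. -/
def PiMap (X : LagVar) : LagVar := shiftX (Pi1 X) (∫ ξ in (0:ℝ)..1, (Pi1 X).y ξ)

/-- Membership in the set `D` of Eulerian data: `u ∈ H^1_per` (with derivative `ux`),
`ρ ∈ L^2_per`, and `μ` a positive periodic Radon measure with
`μ_ac = (u² + u_x² + ρ²) dx`. -/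
def InD (u ux ρ : ℝ → ℝ) (μ : Measure ℝ) : Prop :=
  Continuous u ∧
  (∀ x, u (x + 1) = u x) ∧ (∀ x, ux (x + 1) = ux x) ∧ (∀ x, ρ (x + 1) = ρ x) ∧
  (∀ a b : ℝ, u b - u a = ∫ x in a..b, ux x) ∧
  IntervalIntegrable (fun x => (ux x)^2) volume 0 1 ∧
  IntervalIntegrable (fun x => (ρ x)^2) volume 0 1 ∧
  IsLocallyFiniteMeasure μ ∧
  μ.map (fun x => x + 1) = μ ∧
  (∃ μs : Measure ℝ, μs.MutuallySingular volume ∧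
    μ = volume.withDensity (fun x => ENNReal.ofReal ((u x)^2 + (ux x)^2 + (ρ x)^2)) + μs)

/-- `F_μ(x) = μ([0,x))` for `x ≥ 0` and `−μ([x,0))` for `x < 0`. -/
def Fmu (μ : Measure ℝ) (x : ℝ) : ℝ :=
  if 0 ≤ x then (μ (Set.Ico 0 x)).toReal else -((μ (Set.Ico x 0)).toReal)

/-- The map `L̃ : D → F` from Eulerian to Lagrangian coordinates. -/
def Ltilde (u ρ : ℝ → ℝ) (μ : Measure ℝ) : LagVar :=
  let h : ℝ := (μ (Set.Ico (0:ℝ) 1)).toReal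
  let y : ℝ → ℝ := fun ξ => sSup {x : ℝ | Fmu μ x + x < (1 + h) * ξ}
  { y := y
    U := fun ξ => u (y ξ)
    ν := fun ξ => (1 + h) - deriv y ξ
    r := fun ξ => ρ (y ξ) * deriv y ξ
    yξ := deriv y
    Uξ := deriv (fun ξ => u (y ξ)) }

/-- The relation `(u,ρ,μ) = M(X)`: `u(x) = U(ξ)` for `x = y(ξ)`, `μ = y_#(ν dξ)` and
`ρ dx = y_#(r dξ)` (so that in particular `y_#(r dξ)` is absolutely continuous). -/
def MRel (X : LagVar) (u ρ : ℝ → ℝ) (μ : Measure ℝ) : Prop :=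
  (∀ ξ, u (X.y ξ) = X.U ξ) ∧
  μ = Measure.map X.y (volume.withDensity fun ξ => ENNReal.ofReal (X.ν ξ)) ∧
  (∀ φ : ℝ → ℝ, Continuous φ → HasCompactSupport φ →
    (∫ x, φ x * ρ x) = ∫ ξ, φ (X.y ξ) * X.r ξ)

/-- `J(X_α,X_β) = inf_{f,g ∈ G} ‖X_α • f − X_β • g‖_E`. -/
def Jfun (Xa Xb : LagVar) : ℝ :=
  sInf {v : ℝ | ∃ f g : Relabel, InG f ∧ InG g ∧ v = Edist (act Xa f) (act Xb g)}

/-- `d(X_α,X_β) = inf Σ J(X_{n−1},X_n)` over finite sequences in `F` joining `X_α` to `X_β`. -/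
def dfun (Xa Xb : LagVar) : ℝ :=
  sInf {v : ℝ | ∃ N : ℕ, 1 ≤ N ∧ ∃ Z : ℕ → LagVar,
    (∀ n, n ≤ N → InF (Z n)) ∧ Z 0 = Xa ∧ Z N = Xb ∧
    v = ∑ n ∈ Finset.range N, Jfun (Z n) (Z (n+1))}

/-- `d_M(X_α,X_β) = inf Σ J(X_{n−1},X_n)` over finite sequences in `H^M` joining `X_α` to `X_β`. -/
def dM (M : ℝ) (Xa Xb : LagVar) : ℝ :=
  sInf {v : ℝ | ∃ N : ℕ, 1 ≤ N ∧ ∃ Z : ℕ → LagVar,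
    (∀ n, n ≤ N → InHM M (Z n)) ∧ Z 0 = Xa ∧ Z N = Xb ∧
    v = ∑ n ∈ Finset.range N, Jfun (Z n) (Z (n+1))}

/-- The metric `d_{D^M}` on Eulerian sets of bounded energy. -/
def dD (M : ℝ) (u ρ : ℝ → ℝ) (μ : Measure ℝ) (u' ρ' : ℝ → ℝ) (μ' : Measure ℝ) : ℝ :=
  dM M (PiMap (Ltilde u ρ μ)) (PiMap (Ltilde u' ρ' μ'))

/-- `D^M = {(u,ρ,μ) ∈ D : μ([0,1)) ≤ M}`. -/
def InDM (Mc : ℝ) (u ux ρ : ℝ → ℝ) (μ : Measure ℝ) : Prop :=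
  InD u ux ρ μ ∧ (μ (Set.Ico (0:ℝ) 1)).toReal ≤ Mc

/-- The support of a measure on `ℝ`. -/
def msupport (μ : Measure ℝ) : Set ℝ :=
  {x : ℝ | ∀ ε : ℝ, 0 < ε → 0 < μ (Set.Ioo (x - ε) (x + ε))}

/-- The Eulerian function `P(t,·)` computed from `u(t,·)` and `μ(t)`. -/
def Peul (u : ℝ → ℝ) (μ : Measure ℝ) (x : ℝ) : ℝ :=
  (1 / (2 * (Real.exp 1 - 1))) * ∫ z in (0:ℝ)..1, Real.cosh (x - z) * (u z)^2
    + (1 / (2 * (Real.exp 1 - 1))) * ∫ z in Set.Ico (0:ℝ) 1, Real.cosh (x - z) ∂μ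
    + (1/4) * ∫ z in (0:ℝ)..1, Real.exp (-|x - z|) * (u z)^2
    + (1/4) * ∫ z in Set.Ico (0:ℝ) 1, Real.exp (-|x - z|) ∂μ

/-- Partial derivative in time. -/
def partialT (u : ℝ → ℝ → ℝ) (t x : ℝ) : ℝ := deriv (fun s => u s x) t

/-- Partial derivative in space. -/
def partialX (u : ℝ → ℝ → ℝ) (t x : ℝ) : ℝ := deriv (fun z => u t z) x

/-- `(u,ρ)` is a classical solution, for `t > 0`, of the 2CH system with parameters `κ, η`. -/
def Is2CH (κ η : ℝ) (u ρ : ℝ → ℝ → ℝ) : Prop :=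
  ∀ t, 0 < t → ∀ x,
    partialT u t x - partialT (partialX (partialX u)) t x + κ * partialX u t x
        + 3 * u t x * partialX u t x
        - 2 * partialX u t x * partialX (partialX u) t x
        - u t x * partialX (partialX (partialX u)) t x
        + η * ρ t x * partialX ρ t x = 0 ∧
    partialT ρ t x + partialX (fun s z => u s z * ρ s z) t x = 0

/-- Spatial periodicity (period 1). -/
def SpacePeriodic (φ : ℝ → ℝ → ℝ) : Prop := ∀ t x, φ t (x + 1) = φ t x

/-- Spatially periodic test functions, smooth and compactly supported in time `[0,∞)`. -/
def TestFn (φ : ℝ → ℝ → ℝ) : Prop :=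
  ContDiff ℝ (⊤ : ℕ∞) (Function.uncurry φ) ∧ SpacePeriodic φ ∧
  ∃ T : ℝ, ∀ t, T ≤ t → ∀ x, φ t x = 0

/-- Test functions as above, vanishing also near `t = 0` (support in `(0,∞)`). -/
def TestFn0 (φ : ℝ → ℝ → ℝ) : Prop :=
  TestFn φ ∧ ∃ ε : ℝ, 0 < ε ∧ ∀ t, t ≤ ε → ∀ x, φ t x = 0

/-- Membership in `W^{p,∞}(a,b)`: for `p = 0` it is `L^∞(a,b)`; for `p = k+1` it is
`C^{k,1}`, i.e. `C^k` with Lipschitz `k`-th derivative. -/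
def MemWpInf (p : ℕ) (f : ℝ → ℝ) (a b : ℝ) : Prop :=
  match p with
  | 0 => ∃ C : ℝ, ∀ᵐ x ∂(volume.restrict (Set.Ioo a b)), |f x| ≤ C
  | (k+1) => ContDiffOn ℝ k f (Set.Ioo a b) ∧
      ∃ K : NNReal, LipschitzOnWith K (iteratedDerivWithin k f (Set.Ioo a b)) (Set.Ioo a b)

/-- `(u,ρ,μ)` is `p`-regular on `(a,b)`: `u ∈ W^{p,∞}(a,b)`, `ρ ∈ W^{p−1,∞}(a,b)` (as an
a.e.-defined function, i.e. some representative of `ρ` belongs to `W^{p−1,∞}(a,b)`),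
and `μ = μ_ac` on `(a,b)`. -/
def pRegular (p : ℕ) (u ρ : ℝ → ℝ) (μ : Measure ℝ) (a b : ℝ) : Prop :=
  MemWpInf p u a b ∧
  (∃ g : ℝ → ℝ, (∀ᵐ x ∂(volume.restrict (Set.Ioo a b)), g x = ρ x) ∧
    MemWpInf (p - 1) g a b) ∧
  (μ.singularPart volume) (Set.Ioo a b) = 0

end
/-!
Since `y_ξ + ν ≥ c > 0` and both are bounded, `f` has derivative `(y_ξ + ν)/(1 + h)` pinched
between two positive constants, so `f` is bi-Lipschitz and increasing, and `f(ξ + 1) = f(ξ) + 1`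
by periodicity of `ν`; hence `f ∈ G`. For every `g ∈ G`, `X • g⁻¹` stays in `F`: the densities
transform by the chain rule for the Lipschitz map `g⁻¹`, which holds a.e. because `g⁻¹` is also
anti-Lipschitz, so preimages of null sets under it are null. Finally `(f ∘ f⁻¹)' = 1` gives
`(y_ξ ∘ f⁻¹ + ν ∘ f⁻¹) (f⁻¹)' = 1 + h`, while the new `h` is unchanged since `f⁻¹` maps a
period onto a period.
-/

open scoped NNReal

theorem locallyIntegrable_of_forall_intervalIntegrable {E : Type*} [NormedAddCommGroup E]
    {w : ℝ → E} (hw : ∀ a b, IntervalIntegrable w volume a b) : LocallyIntegrable w volume := by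
  refine locallyIntegrable_iff.2 fun K hK => ?_
  exact ((intervalIntegrable_iff' (μ := volume)).1 (hw (sInf K) (sSup K))).mono_set
    (hK.isBounded.subset_Icc_sInf_sSup.trans Icc_subset_uIcc)

theorem Function.Periodic.locallyIntegrable {E : Type*} [NormedAddCommGroup E] {w : ℝ → E}
    {T : ℝ} (hw : Periodic w T) (hT : T ≠ 0) (h : IntervalIntegrable w volume 0 T) :
    LocallyIntegrable w volume :=
  locallyIntegrable_of_forall_intervalIntegrable (hw.intervalIntegrable₀ hT h)

theorem MeasureTheory.LocallyIntegrable.intervalIntegrable {E : Type*} [NormedAddCommGroup E]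
    {w : ℝ → E} (hw : LocallyIntegrable w volume) (a b : ℝ) : IntervalIntegrable w volume a b :=
  (hw.integrableOn_isCompact isCompact_uIcc).intervalIntegrable

theorem AntilipschitzWith.quasiMeasurePreserving_volume {φ : ℝ → ℝ} {K : ℝ≥0}
    (hφ : AntilipschitzWith K φ) (hm : Measurable φ) :
    Measure.QuasiMeasurePreserving φ volume volume := by
  refine ⟨hm, Measure.AbsolutelyContinuous.mk fun s hs hs0 => ?_⟩
  have := hφ.hausdorffMeasure_preimage_le zero_le_one s
  rw [hausdorffMeasure_real, hs0, mul_zero, nonpos_iff_eq_zero] at this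
  rwa [Measure.map_apply hm hs]

theorem LipschitzWith.integral_deriv_eq_sub {ψ : ℝ → ℝ} {K : ℝ≥0} (hψ : LipschitzWith K ψ)
    (a b : ℝ) : ∫ t in a..b, deriv ψ t = ψ b - ψ a :=
  hψ.lipschitzOnWith.absolutelyContinuousOnInterval.integral_deriv_eq_sub

theorem LipschitzWith.intervalIntegrable_deriv {ψ : ℝ → ℝ} {K : ℝ≥0} (hψ : LipschitzWith K ψ)
    (a b : ℝ) : IntervalIntegrable (deriv ψ) volume a b :=
  hψ.lipschitzOnWith.absolutelyContinuousOnInterval.intervalIntegrable_deriv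

theorem AntilipschitzWith.one_le_mul_deriv {φ : ℝ → ℝ} {L : ℝ≥0} (hφ : AntilipschitzWith L φ)
    (hmono : Monotone φ) {x : ℝ} (hx : DifferentiableAt ℝ φ x) : 1 ≤ L * deriv φ x := by
  refine ge_of_tendsto ((hasDerivAt_iff_tendsto_slope.1 hx.hasDerivAt).const_mul (L : ℝ)) ?_
  filter_upwards [self_mem_nhdsWithin] with y (hy : y ≠ x)
  have hdist := hφ.le_mul_dist y x
  rw [Real.dist_eq, Real.dist_eq] at hdist
  rw [← abs_of_nonneg ((hmono.monotoneOn univ).slope_nonneg trivial trivial), slope_def_field,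
    abs_div, mul_div_assoc', one_le_div (abs_pos.2 (sub_ne_zero.2 hy))]
  exact hdist

theorem deriv_add_one_of_map_add_one {φ : ℝ → ℝ} (hper : ∀ ξ, φ (ξ + 1) = φ ξ + 1) (ξ : ℝ) :
    deriv φ (ξ + 1) = deriv φ ξ := by
  rw [← deriv_comp_add_const, show (fun x => φ (x + 1)) = fun x => φ x + 1 from funext hper,
    deriv_add_const]

section Primitive

variable {f v : ℝ → ℝ}

theorem lipschitzWith_of_sub_eq_integral {K : ℝ≥0} (hf : ∀ a b, f b - f a = ∫ x in a..b, v x)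
    (hv : ∀ᵐ x, |v x| ≤ K) : LipschitzWith K f :=
  .of_dist_le_mul fun x y => by
    rw [Real.dist_eq, Real.dist_eq, hf, ← Real.norm_eq_abs]
    exact intervalIntegral.norm_integral_le_of_norm_le_const_ae (hv.mono fun _ h _ => h)

theorem mul_sub_le_sub_of_sub_eq_integral {κ : ℝ} (hf : ∀ a b, f b - f a = ∫ x in a..b, v x)
    (hv : ∀ a b, IntervalIntegrable v volume a b) (hκ : ∀ᵐ x, κ ≤ v x) {a b : ℝ} (hab : a ≤ b) :
    κ * (b - a) ≤ f b - f a := by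
  rw [hf]
  have := intervalIntegral.integral_mono_ae_restrict hab intervalIntegrable_const (hv a b)
    (ae_restrict_of_ae hκ)
  simpa [mul_comm] using this

theorem antilipschitzWith_of_mul_sub_le {κ : ℝ≥0} (hκ : 0 < κ)
    (hf : ∀ a b, a ≤ b → κ * (b - a) ≤ f b - f a) : AntilipschitzWith κ⁻¹ f := by
  refine .of_le_mul_dist fun x y => ?_
  wlog hxy : x ≤ y generalizing x y
  · rw [dist_comm, dist_comm (f x)]
    exact this y x (le_of_not_ge hxy)
  have h := hf x y hxy
  rw [Real.dist_eq, Real.dist_eq, abs_sub_comm, abs_of_nonneg (sub_nonneg.2 hxy), abs_sub_comm,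
    abs_of_nonneg (le_trans (by positivity) h), NNReal.coe_inv,
    le_inv_mul_iff₀ (by exact_mod_cast hκ)]
  exact h

theorem surjective_of_mul_sub_le {κ : ℝ≥0} (hκ : 0 < κ) (hc : Continuous f)
    (hf : ∀ a b, a ≤ b → κ * (b - a) ≤ f b - f a) : Surjective f := by
  have hκ' : (0 : ℝ) < κ := hκ
  refine hc.surjective (tendsto_atTop_mono' _ ?_ (tendsto_atTop_add_const_left _ (f 0)
    ((tendsto_const_mul_atTop_of_pos hκ').2 tendsto_id)))
    (tendsto_atBot_mono' _ ?_ (tendsto_atBot_add_const_left _ (f 0)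
    ((tendsto_const_mul_atBot_of_pos hκ').2 tendsto_id)))
  · filter_upwards [eventually_ge_atTop 0] with x hx
    simp only [id]
    linarith [hf 0 x hx]
  · filter_upwards [eventually_le_atBot 0] with x hx
    simp only [id]
    linarith [hf x 0 hx]

end Primitive

section ChangeOfVariables

variable {φ w W : ℝ → ℝ} {K : ℝ≥0}

theorem ae_hasDerivAt_intervalIntegral_comp (hφ : LipschitzWith K φ)
    (hφq : Measure.QuasiMeasurePreserving φ volume volume) (hw : LocallyIntegrable w volume)
    (c : ℝ) : ∀ᵐ η, HasDerivAt (fun t => ∫ s in c..φ t, w s) (w (φ η) * deriv φ η) η := by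
  filter_upwards [hφq.ae (LocallyIntegrable.ae_hasDerivAt_integral hw), hφ.ae_differentiableAt]
    with η hw' hφ'
  exact (hw' c).comp η hφ'.hasDerivAt

theorem lipschitzWith_intervalIntegral_comp (hφ : LipschitzWith K φ)
    (hw : LocallyIntegrable w volume) {C : ℝ} (hC : ∀ᵐ x, |w x| ≤ C) (c : ℝ) :
    LipschitzWith (C.toNNReal * K) (fun t => ∫ s in c..φ t, w s) := by
  refine (lipschitzWith_of_sub_eq_integral (f := fun x => ∫ s in c..x, w s) (fun a b => ?_)
    (hC.mono fun _ h => h.trans (Real.le_coe_toNNReal C))).comp hφ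
  exact intervalIntegral.integral_interval_sub_left (hw.intervalIntegrable _ _)
    (hw.intervalIntegrable _ _)

theorem deriv_intervalIntegral_comp_ae_eq (hφ : LipschitzWith K φ)
    (hφq : Measure.QuasiMeasurePreserving φ volume volume) (hw : LocallyIntegrable w volume)
    (c : ℝ) : deriv (fun t => ∫ s in c..φ t, w s) =ᵐ[volume] fun η => w (φ η) * deriv φ η :=
  (ae_hasDerivAt_intervalIntegral_comp hφ hφq hw c).mono fun _ h => h.deriv

theorem intervalIntegral_comp_mul_deriv_of_lipschitzWith (hφ : LipschitzWith K φ)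
    (hφq : Measure.QuasiMeasurePreserving φ volume volume) (hw : LocallyIntegrable w volume)
    {C : ℝ} (hC : ∀ᵐ x, |w x| ≤ C) (a b : ℝ) :
    ∫ η in a..b, w (φ η) * deriv φ η = ∫ x in φ a..φ b, w x := by
  rw [← intervalIntegral.integral_congr_ae ((deriv_intervalIntegral_comp_ae_eq hφ hφq hw 0).mono
    fun _ h _ => h), (lipschitzWith_intervalIntegral_comp hφ hw hC 0).integral_deriv_eq_sub,
    intervalIntegral.integral_interval_sub_left (hw.intervalIntegrable _ _)
      (hw.intervalIntegrable _ _)]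

theorem intervalIntegrable_comp_mul_deriv_of_lipschitzWith (hφ : LipschitzWith K φ)
    (hφq : Measure.QuasiMeasurePreserving φ volume volume) (hw : LocallyIntegrable w volume)
    {C : ℝ} (hC : ∀ᵐ x, |w x| ≤ C) (a b : ℝ) :
    IntervalIntegrable (fun η => w (φ η) * deriv φ η) volume a b :=
  ((lipschitzWith_intervalIntegral_comp hφ hw hC 0).intervalIntegrable_deriv a b).congr_ae
    (ae_restrict_of_ae (deriv_intervalIntegral_comp_ae_eq hφ hφq hw 0))

theorem sub_comp_eq_integral_comp_mul_deriv (hφ : LipschitzWith K φ)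
    (hφq : Measure.QuasiMeasurePreserving φ volume volume) (hw : LocallyIntegrable w volume)
    {C : ℝ} (hC : ∀ᵐ x, |w x| ≤ C) (hW : ∀ a b, W b - W a = ∫ x in a..b, w x) (a b : ℝ) :
    W (φ b) - W (φ a) = ∫ η in a..b, w (φ η) * deriv φ η := by
  rw [intervalIntegral_comp_mul_deriv_of_lipschitzWith hφ hφq hw hC, hW]

theorem ae_abs_comp_mul_deriv_le (hφ : LipschitzWith K φ)
    (hφq : Measure.QuasiMeasurePreserving φ volume volume) {C : ℝ} (hC : ∀ᵐ x, |w x| ≤ C) :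
    ∀ᵐ η, |w (φ η) * deriv φ η| ≤ C * K := by
  filter_upwards [hφq.ae hC] with η hη
  rw [abs_mul]
  exact mul_le_mul hη (norm_deriv_le_of_lipschitz hφ) (abs_nonneg _) ((abs_nonneg _).trans hη)

theorem comp_mul_deriv_add_one (hper : ∀ ξ, φ (ξ + 1) = φ ξ + 1) (hw : ∀ x, w (x + 1) = w x)
    (ξ : ℝ) : w (φ (ξ + 1)) * deriv φ (ξ + 1) = w (φ ξ) * deriv φ ξ := by
  rw [hper, hw, deriv_add_one_of_map_add_one hper]

theorem ae_comp_mul_deriv_eq_one_of_rightInverse {f : ℝ → ℝ}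
    (hf : ∀ a b, f b - f a = ∫ x in a..b, w x) (hw : LocallyIntegrable w volume)
    (hφ : LipschitzWith K φ) (hφq : Measure.QuasiMeasurePreserving φ volume volume)
    (hinv : RightInverse φ f) : ∀ᵐ η, w (φ η) * deriv φ η = 1 := by
  have hprim : (fun t => ∫ x in (0:ℝ)..φ t, w x) = fun t => t - f 0 := by
    ext t
    rw [← hf, hinv]
  filter_upwards [ae_hasDerivAt_intervalIntegral_comp hφ hφq hw 0] with η h
  rw [hprim] at h
  exact h.unique ((hasDerivAt_id η).sub_const _)

end ChangeOfVariables

namespace InG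

variable {g : Relabel}

theorem strictMono (hg : InG g) : StrictMono g.f := by
  obtain ⟨hleft, -, hadd, ⟨K, hK⟩, -⟩ := hg
  refine (hK.continuous.strictMono_of_inj hleft.injective).resolve_right fun hanti => ?_
  have := hanti (lt_add_one (0 : ℝ))
  rw [hadd] at this
  linarith

theorem monotone_finv (hg : InG g) : Monotone g.finv := fun x y hxy =>
  hg.strictMono.le_iff_le.1 (by rwa [hg.2.1 x, hg.2.1 y])

theorem finv_add_one (hg : InG g) (ξ : ℝ) : g.finv (ξ + 1) = g.finv ξ + 1 := by
  obtain ⟨hleft, hright, hadd, -⟩ := hg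
  exact hleft.injective (by rw [hadd, hright, hright])

theorem exists_antilipschitzWith_finv (hg : InG g) : ∃ L, AntilipschitzWith L g.finv := by
  obtain ⟨-, hright, -, ⟨K, hK⟩, -⟩ := hg
  exact ⟨K, hK.to_rightInverse hright⟩

theorem quasiMeasurePreserving_finv (hg : InG g) :
    Measure.QuasiMeasurePreserving g.finv volume volume := by
  obtain ⟨L, hL⟩ := hg.exists_antilipschitzWith_finv
  obtain ⟨-, -, -, -, ⟨K, hK⟩, -⟩ := hg
  exact hL.quasiMeasurePreserving_volume hK.continuous.measurable

end InG

theorem InE.act_inverse {X : LagVar} (hX : InE X) {C : ℝ}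
    (hC : ∀ᵐ ξ, |X.yξ ξ| ≤ C ∧ |X.Uξ ξ| ≤ C ∧ |X.ν ξ| ≤ C ∧ |X.r ξ| ≤ C) {g : Relabel}
    (hg : InG g) : InE (act X g.inverse) := by
  obtain ⟨hy, hU, hyper, hUper, hνper, hrper, hyξper, hUξper, hyFTC, hUFTC, hyξ, hUξ, hν, hr⟩ := hX
  have hφq := hg.quasiMeasurePreserving_finv
  have hper := hg.finv_add_one
  obtain ⟨-, -, -, -, ⟨K, hφ⟩, -⟩ := hg
  have relabeledInt : ∀ {w : ℝ → ℝ}, Periodic w 1 → IntervalIntegrable w volume 0 1 →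
      (∀ᵐ x, |w x| ≤ C) → IntervalIntegrable (fun η => w (g.finv η) * deriv g.finv η) volume 0 1 :=
    fun hw h hwC => intervalIntegrable_comp_mul_deriv_of_lipschitzWith hφ hφq
      (hw.locallyIntegrable one_ne_zero h) hwC 0 1
  exact ⟨hy.comp hφ.continuous, hU.comp hφ.continuous,
    fun ξ => (congrArg X.y (hper ξ)).trans (hyper _),
    fun ξ => (congrArg X.U (hper ξ)).trans (hUper _),
    comp_mul_deriv_add_one hper hνper, comp_mul_deriv_add_one hper hrper,
    comp_mul_deriv_add_one hper hyξper, comp_mul_deriv_add_one hper hUξper,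
    sub_comp_eq_integral_comp_mul_deriv hφ hφq (Periodic.locallyIntegrable hyξper one_ne_zero hyξ)
      (hC.mono fun _ h => h.1) hyFTC,
    sub_comp_eq_integral_comp_mul_deriv hφ hφq (Periodic.locallyIntegrable hUξper one_ne_zero hUξ)
      (hC.mono fun _ h => h.2.1) hUFTC,
    relabeledInt hyξper hyξ (hC.mono fun _ h => h.1),
    relabeledInt hUξper hUξ (hC.mono fun _ h => h.2.1),
    relabeledInt hνper hν (hC.mono fun _ h => h.2.2.1),
    relabeledInt hrper hr (hC.mono fun _ h => h.2.2.2)⟩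

theorem InF.act_inverse {X : LagVar} (hX : InF X) {g : Relabel} (hg : InG g) :
    InF (act X g.inverse) := by
  obtain ⟨hE, ⟨C, hC⟩, hyξ0, hν0, ⟨c, hc, hcle⟩, hconstr⟩ := hX
  have hE' := hE.act_inverse hC hg
  have hφq := hg.quasiMeasurePreserving_finv
  have hmono := hg.monotone_finv
  obtain ⟨L, hφ'⟩ := hg.exists_antilipschitzWith_finv
  obtain ⟨-, -, -, -, ⟨K, hφ⟩, -⟩ := hg
  set φ := g.finv
  have hL : (0 : ℝ) < L := hφ'.pos
  refine ⟨hE', ⟨C * K, ?_⟩, ?_, ?_, ⟨c / L, by positivity, ?_⟩, ?_⟩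
  · filter_upwards [ae_abs_comp_mul_deriv_le hφ hφq (hC.mono fun _ h => h.1),
      ae_abs_comp_mul_deriv_le hφ hφq (hC.mono fun _ h => h.2.1),
      ae_abs_comp_mul_deriv_le hφ hφq (hC.mono fun _ h => h.2.2.1),
      ae_abs_comp_mul_deriv_le hφ hφq (hC.mono fun _ h => h.2.2.2)] with η h1 h2 h3 h4
    exact ⟨h1, h2, h3, h4⟩
  · filter_upwards [hφq.ae hyξ0] with η h
    exact mul_nonneg h hmono.deriv_nonneg
  · filter_upwards [hφq.ae hν0] with η h
    exact mul_nonneg h hmono.deriv_nonneg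
  · filter_upwards [hφq.ae hcle, hφ.ae_differentiableAt] with η h1 h2
    have h3 := hφ'.one_le_mul_deriv hmono h2
    show c / L ≤ X.yξ (φ η) * deriv φ η + X.ν (φ η) * deriv φ η
    rw [← add_mul, div_le_iff₀ hL]
    nlinarith [mul_le_mul_of_nonneg_right h1 (hmono.deriv_nonneg (x := η))]
  · filter_upwards [hφq.ae hconstr] with η h
    show X.yξ (φ η) * deriv φ η * (X.ν (φ η) * deriv φ η)
      = (X.yξ (φ η) * deriv φ η) ^ 2 * X.U (φ η) ^ 2 + (X.Uξ (φ η) * deriv φ η) ^ 2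
        + (X.r (φ η) * deriv φ η) ^ 2
    linear_combination (deriv φ η) ^ 2 * h

noncomputable def relabelDensity (X : LagVar) (ξ : ℝ) : ℝ :=
  (1 / (1 + ∫ η in (0:ℝ)..1, X.ν η)) * (X.yξ ξ + X.ν ξ)

namespace InE

variable {X : LagVar}

theorem intervalIntegrable_yξ (hX : InE X) (a b : ℝ) : IntervalIntegrable X.yξ volume a b := by
  obtain ⟨-, -, -, -, -, -, hper, -, -, -, hint, -⟩ := hX
  exact Periodic.intervalIntegrable₀ hper one_ne_zero hint a b

theorem intervalIntegrable_ν (hX : InE X) (a b : ℝ) : IntervalIntegrable X.ν volume a b := by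
  obtain ⟨-, -, -, -, hper, -, -, -, -, -, -, -, hint, -⟩ := hX
  exact Periodic.intervalIntegrable₀ hper one_ne_zero hint a b

theorem locallyIntegrable_relabelDensity (hX : InE X) :
    LocallyIntegrable (relabelDensity X) volume :=
  locallyIntegrable_of_forall_intervalIntegrable fun a b =>
    ((hX.intervalIntegrable_yξ a b).add (hX.intervalIntegrable_ν a b)).const_mul _

theorem relabelOf_sub_eq_integral (hX : InE X) (a b : ℝ) :
    (relabelOf X).f b - (relabelOf X).f a = ∫ ξ in a..b, relabelDensity X ξ := by
  have hyξ := hX.intervalIntegrable_yξ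
  have hν := hX.intervalIntegrable_ν
  obtain ⟨-, -, -, -, -, -, -, -, hyFTC, -⟩ := hX
  simp only [relabelOf, relabelDensity]
  rw [intervalIntegral.integral_const_mul, intervalIntegral.integral_add (hyξ a b) (hν a b),
    ← hyFTC, ← intervalIntegral.integral_interval_sub_left (hν 0 b) (hν 0 a)]
  ring

end InE

namespace InF

variable {X : LagVar}

theorem one_add_integral_ν_pos (hX : InF X) : 0 < 1 + ∫ η in (0:ℝ)..1, X.ν η := by
  obtain ⟨-, -, -, hν0, -⟩ := hX
  linarith [intervalIntegral.integral_nonneg_of_ae zero_le_one hν0]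

theorem relabelOf_add_one (hX : InF X) (ξ : ℝ) :
    (relabelOf X).f (ξ + 1) = (relabelOf X).f ξ + 1 := by
  have hν := hX.1.intervalIntegrable_ν
  have h1 := hX.one_add_integral_ν_pos
  obtain ⟨⟨-, -, hyper, -, hνper, -⟩, -⟩ := hX
  have hshift : ∫ η in (0:ℝ)..ξ + 1, X.ν η
      = (∫ η in (0:ℝ)..ξ, X.ν η) + ∫ η in (0:ℝ)..1, X.ν η := by
    rw [← intervalIntegral.integral_add_adjacent_intervals (hν 0 ξ) (hν ξ (ξ + 1)),
      Periodic.intervalIntegral_add_eq hνper ξ 0, zero_add]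
  simp only [relabelOf]
  rw [hyper, hshift]
  field_simp
  ring

theorem exists_lipschitzWith_relabelOf (hX : InF X) : ∃ K, LipschitzWith K (relabelOf X).f := by
  obtain ⟨C, hC⟩ := hX.2.1
  have h1 := hX.one_add_integral_ν_pos
  refine ⟨(2 * C / (1 + ∫ η in (0:ℝ)..1, X.ν η)).toNNReal,
    lipschitzWith_of_sub_eq_integral hX.1.relabelOf_sub_eq_integral ?_⟩
  filter_upwards [hC] with ξ hξ
  refine le_trans ?_ (Real.le_coe_toNNReal _)
  rw [relabelDensity, abs_mul, abs_of_pos (by positivity), one_div_mul_eq_div]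
  gcongr
  linarith [abs_add_le (X.yξ ξ) (X.ν ξ), hξ.1, hξ.2.2.1]

theorem exists_mul_sub_le_relabelOf (hX : InF X) :
    ∃ κ : ℝ≥0, 0 < κ ∧ ∀ a b, a ≤ b → κ * (b - a) ≤ (relabelOf X).f b - (relabelOf X).f a := by
  obtain ⟨c, hc, hcle⟩ := hX.2.2.2.2.1
  have h1 := hX.one_add_integral_ν_pos
  refine ⟨(c / (1 + ∫ η in (0:ℝ)..1, X.ν η)).toNNReal, Real.toNNReal_pos.2 (by positivity),
    fun a b => mul_sub_le_sub_of_sub_eq_integral hX.1.relabelOf_sub_eq_integral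
      hX.1.locallyIntegrable_relabelDensity.intervalIntegrable ?_⟩
  filter_upwards [hcle] with ξ hξ
  rw [Real.coe_toNNReal _ (by positivity), relabelDensity, one_div_mul_eq_div]
  gcongr

theorem relabelOf_mem_G (hX : InF X) : InG (relabelOf X) := by
  obtain ⟨K, hK⟩ := hX.exists_lipschitzWith_relabelOf
  obtain ⟨κ, hκ, hgrowth⟩ := hX.exists_mul_sub_le_relabelOf
  have hanti := antilipschitzWith_of_mul_sub_le hκ hgrowth
  have hsurj := surjective_of_mul_sub_le hκ hK.continuous hgrowth
  exact ⟨leftInverse_invFun hanti.injective, rightInverse_invFun hsurj, hX.relabelOf_add_one,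
    ⟨K, hK⟩, ⟨κ⁻¹, hanti.to_rightInverse (rightInverse_invFun hsurj)⟩,
    fun a b => (hK.integral_deriv_eq_sub a b).symm⟩

theorem Pi1_mem_F0 (hX : InF X) : InF0 (Pi1 X) := by
  have hg := hX.relabelOf_mem_G
  refine ⟨hX.act_inverse hg, ?_⟩
  have hφq := hg.quasiMeasurePreserving_finv
  have hper := hg.finv_add_one
  have h1 := hX.one_add_integral_ν_pos
  have hνint := locallyIntegrable_of_forall_intervalIntegrable hX.1.intervalIntegrable_ν
  have hsub := hX.1.relabelOf_sub_eq_integral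
  have hdens := hX.1.locallyIntegrable_relabelDensity
  obtain ⟨-, hright, -, -, ⟨K, hφ⟩, -⟩ := hg
  obtain ⟨⟨-, -, -, -, hνper, -⟩, ⟨C, hC⟩, -⟩ := hX
  set φ := (relabelOf X).finv
  have hmass : ∫ η in (0:ℝ)..1, X.ν (φ η) * deriv φ η = ∫ η in (0:ℝ)..1, X.ν η := by
    rw [intervalIntegral_comp_mul_deriv_of_lipschitzWith hφ hφq hνint (hC.mono fun _ h => h.2.2.1),
      ← zero_add (1 : ℝ), hper, Periodic.intervalIntegral_add_eq hνper]
  filter_upwards [ae_comp_mul_deriv_eq_one_of_rightInverse hsub hdens hφ hφq hright] with η h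
  show X.yξ (φ η) * deriv φ η + X.ν (φ η) * deriv φ η
    = 1 + ∫ η in (0:ℝ)..1, X.ν (φ η) * deriv φ η
  rw [hmass]
  simp only [relabelDensity] at h
  field_simp at h
  linarith

end InF

/-- For `X = (y,U,ν,r) ∈ F` with `h = ∫₀¹ ν dη`, the function
`f(ξ) = (1/(1+h))(y(ξ) + ∫₀^ξ ν(η) dη)` belongs to the relabeling group `G`, and
`X • f⁻¹` belongs to `F₀`, i.e. satisfies `y_ξ + ν = 1 + h` almost everywhere. -/
theorem relabel_to_F0 (X : LagVar) (hX : InF X) :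
    ∃ g : Relabel, InG g ∧
      (∀ ξ, g.f ξ =
        (1 / (1 + ∫ η in (0:ℝ)..1, X.ν η)) * (X.y ξ + ∫ η in (0:ℝ)..ξ, X.ν η)) ∧
      InF0 (act X g.inverse) :=
  ⟨relabelOf X, hX.relabelOf_mem_G, fun _ => rfl, hX.Pi1_mem_F0⟩
end

section
/- For any M > 0, with M̄ = 6(1+M), the inclusions B_M ∩ H ⊂ H^M ⊂ B_{M̄} ∩ H hold. -/
open MeasureTheory Real Set Filter Function

/-- For any `M > 0`, with `M̄ = 6(1+M)`, one has `B_M ∩ H ⊆ H^M ⊆ B_{M̄} ∩ H`. -/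
theorem BM_HM_inclusions (M : ℝ) (hM : 0 < M) (X : LagVar) :
    ((InBM M X ∧ InH X) → InHM M X) ∧
    (InHM M X → (InBM (6 * (1 + M)) X ∧ InH X)) := by
  constructor
  · rintro ⟨hB, hH⟩
    refine ⟨hH, ?_⟩
    have h1 : (∫ ξ in (0:ℝ)..1, X.ν ξ) ≤ L1norm01 X.ν :=
      le_trans (le_abs_self _)
        (intervalIntegral.abs_integral_le_integral_abs (by norm_num))
    have h2 : 0 ≤ supNorm01 X.U :=
      Real.sSup_nonneg fun x hx => by
        obtain ⟨ξ, -, rfl⟩ := hx; exact abs_nonneg _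
    have h3 : 0 ≤ L1norm01 X.Uξ :=
      intervalIntegral.integral_nonneg (by norm_num) fun x _ => abs_nonneg _
    have h4 : 0 ≤ L1norm01 X.yξ :=
      intervalIntegral.integral_nonneg (by norm_num) fun x _ => abs_nonneg _
    have hB' := hB
    unfold InBM W11norm at hB'
    linarith
  · rintro ⟨⟨⟨hF, hF0⟩, hy0⟩, hhM⟩
    refine ⟨?_, ⟨⟨hF, hF0⟩, hy0⟩⟩
    obtain ⟨hE, hbdd, hyξ0, hν0, hc, hconstr⟩ := hF
    obtain ⟨hycont, hUcont, hyper, hUper, hνper, hrper, -, -, hyFTC, hUFTC,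
      hyξII, hUξII, hνII, hrII⟩ := hE
    set h : ℝ := ∫ η in (0:ℝ)..1, X.ν η with hdef
    have hh0 : 0 ≤ h :=
      intervalIntegral.integral_nonneg_of_ae (by norm_num) hν0
    have hhM' : h ≤ M := hhM
    -- ∫₀¹ yξ = 1
    have hy1 : (∫ ξ in (0:ℝ)..1, X.yξ ξ) = 1 := by
      have h01 : X.y 1 = X.y 0 + 1 := by simpa using hyper 0
      have := hyFTC 0 1
      rw [h01] at this; linarith
    -- L1 norm of yξ equals 1
    have hL1y : L1norm01 X.yξ = 1 := by
      have : L1norm01 X.yξ = ∫ ξ in (0:ℝ)..1, X.yξ ξ := by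
        apply intervalIntegral.integral_congr_ae
        filter_upwards [hyξ0] with ξ hξ _
        exact abs_of_nonneg hξ
      rw [this, hy1]
    -- L1 norm of ν equals h
    have hL1ν : L1norm01 X.ν = h := by
      apply intervalIntegral.integral_congr_ae
      filter_upwards [hν0] with ξ hξ _
      exact abs_of_nonneg hξ
    -- pointwise a.e. bound on Uξ
    have hUξb : ∀ᵐ ξ ∂(volume : Measure ℝ), |X.Uξ ξ| ≤ (1 + h) / 2 := by
      filter_upwards [hconstr, hyξ0, hν0, hF0] with ξ hcξ hyξ hνξ hsum
      have hsq : (X.Uξ ξ) ^ 2 ≤ ((1 + h) / 2) ^ 2 := by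
        nlinarith [sq_nonneg (X.yξ ξ * X.U ξ), sq_nonneg (X.r ξ),
          sq_nonneg (X.yξ ξ - X.ν ξ)]
      have := Real.abs_le_sqrt hsq
      rwa [Real.sqrt_sq (by linarith)] at this
    -- L1 norm of Uξ
    have hL1Uξ : L1norm01 X.Uξ ≤ (1 + h) / 2 := by
      have := intervalIntegral.integral_mono_ae (μ := volume)
        (f := fun ξ => |X.Uξ ξ|) (g := fun _ => (1 + h) / 2)
        (by norm_num) hUξII.abs intervalIntegrable_const hUξb
      simpa [L1norm01] using this
    -- a.e. bound yξ U² ≤ ν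
    have hgν : ∀ᵐ ξ ∂(volume : Measure ℝ), X.yξ ξ * (X.U ξ) ^ 2 ≤ X.ν ξ := by
      filter_upwards [hconstr, hyξ0, hν0] with ξ hcξ hyξ hνξ
      rcases hyξ.eq_or_lt with heq | hlt
      · rw [← heq]; simpa using hνξ
      · have hmul : X.yξ ξ * (X.yξ ξ * (X.U ξ) ^ 2) ≤ X.yξ ξ * X.ν ξ := by
          nlinarith [sq_nonneg (X.Uξ ξ), sq_nonneg (X.r ξ)]
        exact le_of_mul_le_mul_left hmul hlt
    have hUsqcont : Continuous fun ξ => (X.U ξ) ^ 2 := hUcont.pow 2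
    have hgII : IntervalIntegrable (fun ξ => X.yξ ξ * (X.U ξ) ^ 2) volume 0 1 :=
      hyξII.mul_continuousOn hUsqcont.continuousOn
    have hgle : (∫ ξ in (0:ℝ)..1, X.yξ ξ * (X.U ξ) ^ 2) ≤ h :=
      intervalIntegral.integral_mono_ae (by norm_num) hgII hνII hgν
    -- there is a point in [0,1] where U² ≤ h
    have hξ0 : ∃ ξ₀ ∈ Set.Icc (0:ℝ) 1, (X.U ξ₀) ^ 2 ≤ h := by
      by_contra hcon
      push_neg at hcon
      obtain ⟨ξ₁, hξ₁, hmin⟩ := isCompact_Icc.exists_isMinOn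
        (Set.nonempty_Icc.2 zero_le_one) hUsqcont.continuousOn
      set m : ℝ := (X.U ξ₁) ^ 2 with hm
      have hhm : h < m := hcon ξ₁ hξ₁
      have hintm : (∫ ξ in (0:ℝ)..1, m * X.yξ ξ) = m := by
        rw [intervalIntegral.integral_const_mul, hy1, mul_one]
      have hle2 : (∫ ξ in (0:ℝ)..1, m * X.yξ ξ)
          ≤ ∫ ξ in (0:ℝ)..1, X.yξ ξ * (X.U ξ) ^ 2 := by
        apply intervalIntegral.integral_mono_ae_restrict (by norm_num)
          (hyξII.const_mul m) hgII
        have h1 := ae_restrict_of_ae (μ := (volume : Measure ℝ))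
          (s := Set.Icc (0:ℝ) 1) hyξ0
        have h2 := ae_restrict_mem (μ := (volume : Measure ℝ))
          (measurableSet_Icc (a := (0:ℝ)) (b := 1))
        filter_upwards [h1, h2] with ξ hyξ hmem
        have hUm : m ≤ (X.U ξ) ^ 2 := hmin hmem
        nlinarith
      linarith
    obtain ⟨ξ₀, hξ₀mem, hξ₀⟩ := hξ0
    have hU0 : |X.U ξ₀| ≤ Real.sqrt h := by
      have := Real.abs_le_sqrt hξ₀
      simpa using this
    -- sup norm bound on U
    have hsupU : supNorm01 X.U ≤ Real.sqrt h + (1 + h) / 2 := by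
      apply Real.sSup_le
      · rintro v ⟨ξ, hξ, rfl⟩
        have key : ∀ a b : ℝ, a ∈ Set.Icc (0:ℝ) 1 → b ∈ Set.Icc (0:ℝ) 1 → a ≤ b →
            |X.U b - X.U a| ≤ (1 + h) / 2 := by
          intro a b ha hb hab
          rw [hUFTC a b]
          have habs := intervalIntegral.abs_integral_le_integral_abs
            (f := X.Uξ) (μ := volume) hab
          have hmono : (∫ η in a..b, |X.Uξ η|) ≤ ∫ η in (0:ℝ)..1, |X.Uξ η| :=
            intervalIntegral.integral_mono_interval ha.1 hab hb.2
              (Filter.Eventually.of_forall fun η => abs_nonneg _) hUξII.abs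
          exact habs.trans (hmono.trans hL1Uξ)
        have hdiff : |X.U ξ - X.U ξ₀| ≤ (1 + h) / 2 := by
          rcases le_total ξ₀ ξ with hle | hle
          · exact key ξ₀ ξ hξ₀mem hξ hle
          · rw [abs_sub_comm]; exact key ξ ξ₀ hξ hξ₀mem hle
        have : |X.U ξ| ≤ |X.U ξ₀| + |X.U ξ - X.U ξ₀| := by
          have := abs_add_le (X.U ξ₀) (X.U ξ - X.U ξ₀)
          simpa using this
        linarith
      · positivity
    have hsqrt : Real.sqrt h ≤ (1 + h) / 2 := by
      nlinarith [Real.sq_sqrt hh0, Real.sqrt_nonneg h, sq_nonneg (Real.sqrt h - 1)]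
    unfold InBM W11norm
    rw [hL1y, hL1ν]
    linarith
end
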